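/- Suppose n, m, k ∈ ℕ satisfy n ≥ 2^{k+1} + 1 and 2^k + 1 ≤ m ≤ 2^{k+1} (Player 1 is in the weeds at level k; note that then k = ⌊log₂(m−1)⌋ and 1 ≤ 2^k ≤ n−1). Then the bold bid b = 2^k = 2^{⌊log₂(m−1)⌋} is optimal: p(n,m) = 1 − (2^k/n)·p(m, 2^k) − ((n − 2^k)/n)·p(m, n − 2^k), i.e., the maximum in the defining recurrence for p(n,m) is attained at b = 2^k. -/

import Mathlib

/-!
Write `level n = ⌊log₂ (n - 1)⌋` and let `sqInterp` be the piecewise-linear interpolation of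
`2 b ^ 2 - 2` at the powers of two. Then `3 n m · p n m` has an explicit closed form
`scaledValue n m`: it is `sqInterp m` when Player 1 is in the weeds (`m ≤ 2 ^ level n`), and
affine in `m` otherwise. In terms of it, the bid `b` is worth
`1 - (scaledValue m b + scaledValue m (n - b)) / (3 n m)`, so the closed form follows by strong
induction on `n + m` once the split sum is shown to be at least `3 n m - scaledValue n m`, with
equality at the bold bid `2 ^ level m` in the weeds and at `n / 2` otherwise. Both facts come
down to the convexity of `sqInterp`. The theorem is the equality case at the bold bid.
-/

namespace GuessWho

def level (n : ℕ) : ℕ := Nat.log 2 (n - 1)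

lemma pow_level_lt {n : ℕ} (hn : 2 ≤ n) : 2 ^ level n < n := by
  have := Nat.pow_log_le_self 2 (show n - 1 ≠ 0 by omega)
  unfold level; omega

lemma pow_level_le {n : ℕ} (hn : 1 ≤ n) : 2 ^ level n ≤ n := by
  rcases hn.eq_or_lt with rfl | hn
  · simp [level]
  · exact (pow_level_lt hn).le

lemma le_pow_level_succ (n : ℕ) : n ≤ 2 ^ (level n + 1) := by
  have := Nat.lt_pow_succ_log_self one_lt_two (n - 1)
  unfold level; omega

lemma level_eq {n k : ℕ} (h1 : 2 ^ k < n) (h2 : n ≤ 2 ^ (k + 1)) : level n = k :=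
  Nat.log_eq_of_pow_le_of_lt_pow (by omega) (by omega)

lemma pow_le_pow_level_of_pow_lt {n k : ℕ} (h : 2 ^ k < n) : 2 ^ k ≤ 2 ^ level n := by
  have hlt := (Nat.pow_lt_pow_iff_right (by norm_num)).mp (h.trans_le (le_pow_level_succ n))
  exact Nat.pow_le_pow_right (by norm_num) (by omega)

lemma pow_level_succ_lt {n m : ℕ} (hm : 2 ≤ m) (hw : m ≤ 2 ^ level n) :
    2 ^ (level m + 1) < n := by
  have hK := (pow_level_lt hm).trans_le hw
  have hlt := (Nat.pow_lt_pow_iff_right (by norm_num)).mp hK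
  have hn : 2 ≤ n := by
    by_contra! hn
    have : level n = 0 := by simp [level, Nat.sub_eq_zero_of_le (Nat.le_of_lt_succ hn)]
    simp [this] at hK
  exact (Nat.pow_le_pow_right (by norm_num) hlt).trans_lt (pow_level_lt hn)

/-- The piecewise-linear interpolation of `2 b ^ 2 - 2` at the powers of two. -/
def sqInterp (b : ℕ) : ℚ := 6 * 2 ^ level b * b - 4 * (2 ^ level b) ^ 2 - 2

lemma sqInterp_two_pow (j : ℕ) : sqInterp (2 ^ j) = 2 * (2 ^ j) ^ 2 - 2 := by
  cases j with
  | zero => norm_num [sqInterp, level]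
  | succ i =>
    rw [sqInterp, level_eq (k := i) (by simp [pow_succ]) le_rfl]
    push_cast
    ring

lemma sqInterp_one : sqInterp 1 = 0 := by
  simpa using sqInterp_two_pow 0

lemma sqInterp_eq {b j : ℕ} (h1 : 2 ^ j ≤ b) (h2 : b ≤ 2 ^ (j + 1)) :
    sqInterp b = 6 * 2 ^ j * b - 4 * (2 ^ j) ^ 2 - 2 := by
  rcases h1.eq_or_lt with rfl | h1
  · rw [sqInterp_two_pow]; push_cast; ring
  · rw [sqInterp, level_eq h1 h2]

lemma sqInterp_eq_of_le_two_mul {b J : ℕ} (h1 : b ≤ 2 ^ J) (h2 : 2 ^ J ≤ 2 * b) :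
    sqInterp b = 3 * 2 ^ J * b - (2 ^ J) ^ 2 - 2 := by
  cases J with
  | zero =>
    obtain rfl : b = 1 := by simp at h1 h2; omega
    rw [sqInterp_one]; norm_num
  | succ j =>
    rw [sqInterp_eq (j := j) (by rw [pow_succ] at h2; omega) h1]
    ring

/-- Convexity of `sqInterp`: it lies above the line through its values at `2 ^ (K - 1)` and
`2 ^ K`. -/
lemma le_sqInterp {b : ℕ} (hb : 1 ≤ b) (K : ℕ) :
    3 * 2 ^ K * b - (2 ^ K) ^ 2 - 2 ≤ sqInterp b := by
  have hb2 := le_pow_level_succ b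
  set J := level b
  have hx1 : ((2 ^ J : ℕ) : ℚ) ≤ b := by exact_mod_cast pow_level_le hb
  have hx2 : ((b : ℕ) : ℚ) ≤ ((2 * 2 ^ J : ℕ) : ℚ) := by
    rw [pow_succ] at hb2
    exact_mod_cast (by omega : b ≤ 2 * 2 ^ J)
  push_cast at hx1 hx2
  have hfactor : sqInterp b - (3 * 2 ^ K * b - (2 ^ K) ^ 2 - 2)
      = (2 * 2 ^ J - 2 ^ K) * (3 * b - 2 * 2 ^ J - 2 ^ K) := by
    rw [sqInterp]; ring
  have hpow : (2 : ℚ) ^ K ≤ 2 ^ J ∨ (2 : ℚ) ^ K = 2 * 2 ^ J ∨ 4 * 2 ^ J ≤ (2 : ℚ) ^ K := by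
    rcases (show K ≤ J ∨ K = J + 1 ∨ J + 2 ≤ K by omega) with h | rfl | h
    · exact Or.inl (pow_le_pow_right₀ one_le_two h)
    · exact Or.inr (Or.inl (pow_succ' 2 J))
    · refine Or.inr (Or.inr ?_)
      calc 4 * (2 : ℚ) ^ J = 2 ^ (J + 2) := by ring
        _ ≤ 2 ^ K := pow_le_pow_right₀ one_le_two h
  have : 0 ≤ (2 * 2 ^ J - 2 ^ K) * (3 * b - 2 * 2 ^ J - (2 : ℚ) ^ K) := by
    rcases hpow with h | h | h
    · exact mul_nonneg (by linarith) (by linarith)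
    · rw [h, sub_self, zero_mul]
    · exact mul_nonneg_of_nonpos_of_nonpos (by linarith) (by linarith)
  linarith

/-- The closed form of `3 n m · p n m`. -/
def scaledValue (n m : ℕ) : ℚ :=
  if m ≤ 2 ^ level n then sqInterp m
  else 3 * n * m - 3 * 2 ^ level n * n + 2 * (2 ^ level n) ^ 2 + 4

lemma scaledValue_of_le {m a : ℕ} (h : a ≤ 2 ^ level m) : scaledValue m a = sqInterp a :=
  if_pos h

lemma scaledValue_of_lt {m a : ℕ} (h : 2 ^ level m < a) :
    scaledValue m a = 3 * m * a - 3 * 2 ^ level m * m + 2 * (2 ^ level m) ^ 2 + 4 :=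
  if_neg h.not_ge

lemma scaledValue_one (n : ℕ) : scaledValue n 1 = 0 := by
  rw [scaledValue_of_le Nat.one_le_two_pow, sqInterp_one]

lemma le_scaledValue {m a : ℕ} (hm : 1 ≤ m) (ha : 1 ≤ a) :
    3 * m * (a - 2 ^ level m) + 2 * (2 ^ level m) ^ 2 - 2 ≤ scaledValue m a := by
  rcases le_or_gt a (2 ^ level m) with h | h
  · rw [scaledValue_of_le h]
    have hconv := le_sqInterp ha (level m)
    have hma : ((a : ℕ) : ℚ) ≤ ((2 ^ level m : ℕ) : ℚ) := by exact_mod_cast h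
    have hmm : ((2 ^ level m : ℕ) : ℚ) ≤ m := by exact_mod_cast pow_level_le hm
    push_cast at hma hmm
    nlinarith [mul_nonneg (sub_nonneg.2 hma) (sub_nonneg.2 hmm)]
  · rw [scaledValue_of_lt h]
    linarith

lemma le_scaledValue_of_pow_lt {m a J : ℕ} (hJ : 2 ^ J < m) (ha : 1 ≤ a) :
    3 * 2 ^ J * a - (2 ^ J) ^ 2 - 2 ≤ scaledValue m a := by
  rcases le_or_gt a (2 ^ level m) with h | h
  · rw [scaledValue_of_le h]
    exact le_sqInterp ha J
  · rw [scaledValue_of_lt h]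
    have hJK : ((2 ^ J : ℕ) : ℚ) ≤ ((2 ^ level m : ℕ) : ℚ) := by
      exact_mod_cast pow_le_pow_level_of_pow_lt hJ
    have hJm : ((2 ^ J : ℕ) : ℚ) ≤ m := by exact_mod_cast hJ.le
    have hKa : ((2 ^ level m : ℕ) : ℚ) ≤ a := by exact_mod_cast h.le
    push_cast at hJK hJm hKa
    have hK : (0 : ℚ) ≤ 2 ^ level m := by positivity
    nlinarith [mul_nonneg (sub_nonneg.2 hJm) (sub_nonneg.2 hKa),
      mul_nonneg (sub_nonneg.2 hJK) (show (0 : ℚ) ≤ 2 * 2 ^ level m - 2 ^ J by linarith)]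

section Split

variable {n m : ℕ}

lemma le_scaledValue_add_of_weeds (hm : 2 ≤ m) (hw : m ≤ 2 ^ level n) {b : ℕ} (hb : 1 ≤ b)
    (hbn : b < n) :
    3 * n * m - scaledValue n m ≤ scaledValue m b + scaledValue m (n - b) := by
  have hn := pow_level_succ_lt hm hw
  rw [pow_succ] at hn
  have hK := pow_level_lt hm
  rw [scaledValue_of_le hw, sqInterp_eq hK.le (le_pow_level_succ m)]
  have hlo₁ := le_scaledValue (m := m) (by omega) hb
  have hlo₂ := le_scaledValue (m := m) (a := n - b) (by omega) (by omega)
  rw [Nat.cast_sub hbn.le] at hlo₂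
  -- `n > 2 ^ (level m + 1)`, so one of the two parts exceeds `2 ^ level m`
  rcases le_or_gt b (2 ^ level m) with h | h
  · rw [scaledValue_of_lt (a := n - b) (by omega), Nat.cast_sub hbn.le]
    linarith
  · rw [scaledValue_of_lt h]
    linarith

lemma scaledValue_add_bold_of_weeds (hm : 2 ≤ m) (hw : m ≤ 2 ^ level n) :
    scaledValue m (2 ^ level m) + scaledValue m (n - 2 ^ level m)
      = 3 * n * m - scaledValue n m := by
  have hn := pow_level_succ_lt hm hw
  rw [pow_succ] at hn
  have hK := pow_level_lt hm
  rw [scaledValue_of_le le_rfl, scaledValue_of_lt (a := n - 2 ^ level m) (by omega),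
    scaledValue_of_le hw, sqInterp_eq hK.le (le_pow_level_succ m), sqInterp_two_pow,
    Nat.cast_sub (by omega)]
  push_cast
  ring

lemma le_scaledValue_add_of_not_weeds (hw : 2 ^ level n < m) {b : ℕ} (hb : 1 ≤ b)
    (hbn : b < n) :
    3 * n * m - scaledValue n m ≤ scaledValue m b + scaledValue m (n - b) := by
  have h₁ := le_scaledValue_of_pow_lt hw hb
  have h₂ := le_scaledValue_of_pow_lt hw (a := n - b) (by omega)
  rw [scaledValue_of_lt hw]
  rw [Nat.cast_sub hbn.le] at h₂
  linarith

lemma scaledValue_add_half_of_not_weeds (hn : 2 ≤ n) (hw : 2 ^ level n < m) :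
    scaledValue m (n / 2) + scaledValue m (n - n / 2) = 3 * n * m - scaledValue n m := by
  have hJ := pow_level_lt hn
  have hJ' := le_pow_level_succ n
  have hJm := pow_le_pow_level_of_pow_lt hw
  rw [pow_succ] at hJ'
  rw [scaledValue_of_le (by omega), scaledValue_of_le (by omega), scaledValue_of_lt hw,
    sqInterp_eq_of_le_two_mul (J := level n) (by omega) (by omega),
    sqInterp_eq_of_le_two_mul (J := level n) (by omega) (by omega), Nat.cast_sub (by omega)]
  ring

end Split

def bidValue (p : ℕ → ℕ → ℚ) (n m b : ℕ) : ℚ :=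
  1 - (b : ℚ) / n * p m b - ((n - b : ℕ) : ℚ) / n * p m (n - b)

lemma bidValue_eq {p : ℕ → ℕ → ℚ} {n m b : ℕ} (hm : 1 ≤ m) (hb : 1 ≤ b) (hbn : b < n)
    (h₁ : p m b = scaledValue m b / (3 * m * b))
    (h₂ : p m (n - b) = scaledValue m (n - b) / (3 * m * (n - b : ℕ))) :
    bidValue p n m b = 1 - (scaledValue m b + scaledValue m (n - b)) / (3 * n * m) := by
  have : ((n - b : ℕ) : ℚ) ≠ 0 := by norm_cast; omega
  rw [bidValue, h₁, h₂]
  field_simp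
  ring

theorem eq_scaledValue_div {p : ℕ → ℕ → ℚ} (hp2 : ∀ n : ℕ, 2 ≤ n → p n 1 = 0)
    (hrec : ∀ n m : ℕ, ∀ hn : 2 ≤ n, 2 ≤ m →
      p n m = (Finset.Icc 1 (n - 1)).sup' (Finset.nonempty_Icc.mpr (Nat.le_sub_of_add_le hn))
        (fun b => 1 - (b : ℚ) / (n : ℚ) * p m b
          - ((n - b : ℕ) : ℚ) / (n : ℚ) * p m (n - b)))
    {n m : ℕ} (hn : 2 ≤ n) (hm : 1 ≤ m) : p n m = scaledValue n m / (3 * n * m) := by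
  rcases hm.eq_or_lt with rfl | hm
  · rw [hp2 n hn, scaledValue_one, zero_div]
  have hsplit : ∀ b ∈ Finset.Icc 1 (n - 1), bidValue p n m b
      = 1 - (scaledValue m b + scaledValue m (n - b)) / (3 * n * m) := by
    intro b hb
    obtain ⟨hb, hbn⟩ := Finset.mem_Icc.mp hb
    exact bidValue_eq (by omega) hb (by omega) (eq_scaledValue_div hp2 hrec hm hb)
      (eq_scaledValue_div hp2 hrec hm (by omega))
  have hval : scaledValue n m / (3 * n * m)
      = 1 - (3 * n * m - scaledValue n m) / (3 * n * m) := by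
    field_simp; ring
  rw [hrec n m hn hm, hval]
  apply le_antisymm
  · refine Finset.sup'_le _ _ fun b hb => ?_
    rw [← bidValue, hsplit b hb]
    rw [Finset.mem_Icc] at hb
    have : 3 * n * m - scaledValue n m ≤ scaledValue m b + scaledValue m (n - b) := by
      rcases le_or_gt m (2 ^ level n) with hw | hw
      · exact le_scaledValue_add_of_weeds hm hw hb.1 (by omega)
      · exact le_scaledValue_add_of_not_weeds hw hb.1 (by omega)
    gcongr
  · rcases le_or_gt m (2 ^ level n) with hw | hw
    · have hK := pow_level_succ_lt hm hw
      rw [pow_succ] at hK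
      have hmem : 2 ^ level m ∈ Finset.Icc 1 (n - 1) :=
        Finset.mem_Icc.mpr ⟨Nat.one_le_two_pow, by omega⟩
      refine Finset.le_sup'_of_le _ hmem ?_
      rw [← bidValue, hsplit _ hmem, scaledValue_add_bold_of_weeds hm hw]
    · have hmem : n / 2 ∈ Finset.Icc 1 (n - 1) := Finset.mem_Icc.mpr ⟨by omega, by omega⟩
      refine Finset.le_sup'_of_le _ hmem ?_
      rw [← bidValue, hsplit _ hmem, scaledValue_add_half_of_not_weeds hn hw]
termination_by n + m
decreasing_by all_goals omega

end GuessWho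

/-- In "Guess Who?", when Player 1 is in the weeds at level `k`
(`n ≥ 2^(k+1) + 1` and `2^k + 1 ≤ m ≤ 2^(k+1)`), the bold bid `b = 2^k`
is optimal: the maximum in the defining recurrence for `p n m` is attained
at `b = 2^k`. -/
theorem guess_who_bold_bid_optimal_in_the_weeds
    (p : ℕ → ℕ → ℚ)
    (hp2 : ∀ n : ℕ, 2 ≤ n → p n 1 = 0)
    (hrec : ∀ n m : ℕ, ∀ hn : 2 ≤ n, 2 ≤ m →
      p n m = (Finset.Icc 1 (n - 1)).sup' (Finset.nonempty_Icc.mpr (by omega))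
        (fun b => 1 - (b : ℚ) / (n : ℚ) * p m b
          - ((n - b : ℕ) : ℚ) / (n : ℚ) * p m (n - b)))
    (n m k : ℕ) (hn : 2 ^ (k + 1) + 1 ≤ n) (hm1 : 2 ^ k + 1 ≤ m) (hm2 : m ≤ 2 ^ (k + 1)) :
    p n m = 1 - ((2 ^ k : ℕ) : ℚ) / (n : ℚ) * p m (2 ^ k)
      - ((n - 2 ^ k : ℕ) : ℚ) / (n : ℚ) * p m (n - 2 ^ k) := by
  have hm : 2 ≤ m := by have := Nat.one_le_two_pow (n := k); omega
  have hbn : 2 ^ k < n := by rw [pow_succ] at hn; omega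
  have hk : GuessWho.level m = k := GuessWho.level_eq (by omega) hm2
  have hw : m ≤ 2 ^ GuessWho.level n :=
    hm2.trans (GuessWho.pow_le_pow_level_of_pow_lt (by omega))
  have hp {a b : ℕ} (ha : 2 ≤ a) (hb : 1 ≤ b) :=
    GuessWho.eq_scaledValue_div (p := p) hp2 hrec ha hb
  change p n m = GuessWho.bidValue p n m (2 ^ k)
  rw [GuessWho.bidValue_eq (by omega) Nat.one_le_two_pow hbn (hp hm Nat.one_le_two_pow)
    (hp hm (by omega)), ← hk, GuessWho.scaledValue_add_bold_of_weeds hm hw,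
    hp (by omega) (by omega)]
  have : (n : ℚ) ≠ 0 := by norm_cast; omega
  field_simp
  ring
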